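/- Let θ be an algebraic integer of degree n > 2 and I = Z + Zθ + 2Zθ² + ... + 2Zθ^{n-1} with coefficient ring R = Z + 2Zθ + ... + 2Zθ^{n-1}. Then I is not invertible in R, i.e., there is no fractional ideal J with IJ = R. -/

import Mathlib

/-- The colon (quotient) of two `ℤ`-submodules of a field `K`:
`(J : I) = {x ∈ K : x I ⊆ J}`. -/
def colonSub {K : Type*} [Field K] (J I : Submodule ℤ K) : Submodule ℤ K where
  carrier := {x : K | ∀ y ∈ I, x * y ∈ J}
  add_mem' := by
    intro a b ha hb y hy
    have := J.add_mem (ha y hy) (hb y hy)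
    simpa [add_mul] using this
  zero_mem' := by intro y hy; simp
  smul_mem' := by
    intro c x hx y hy
    rw [smul_mul_assoc]
    exact J.smul_mem c (hx y hy)

/-- The `ℤ`-module `ℤ + ℤθ + ⋯ + ℤθ^k + 2ℤθ^{k+1} + ⋯ + 2ℤθ^{n-1}`. -/
noncomputable def mixedSpan {K : Type*} [Field K] (θ : K) (n k : ℕ) : Submodule ℤ K :=
  Submodule.span ℤ (Set.range fun i : Fin n =>
    (if (i : ℕ) ≤ k then 1 else 2) * θ ^ (i : ℕ))

/-- The order `R = ℤ + 2ℤθ + 2ℤθ² + ⋯ + 2ℤθ^{n-1}`. -/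
noncomputable def suborderR {K : Type*} [Field K] (θ : K) (n : ℕ) : Submodule ℤ K :=
  Submodule.span ℤ (Set.range fun i : Fin n =>
    (if (i : ℕ) = 0 then 1 else 2) * θ ^ (i : ℕ))

/-!
Write `P = ℤ[θ] = ℤ + ℤθ + ⋯ + ℤθ^{n-1}` and `Mₖ = ℤ + ℤθ + ⋯ + ℤθ^k + 2ℤθ^{k+1} + ⋯ + 2ℤθ^{n-1}`,
so that `I = M₁` and `R = M₀`. Every `Mₖ` and `P` is an `R`-module, `I · M_{n-2} = P` (the missing
`θ^{n-1}` is `θ · θ^{n-2}`) and `I · P = P`. If `IJ = R`, multiplying `I · M_{n-2} = I · P` by `J`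
gives `M_{n-2} = P`, which is false because `θ^{n-1} ∉ M_{n-2}` by linear independence of the
powers of `θ`.
-/

open Submodule

theorem eq_of_mul_left_eq_mul_left {M : Type*} [CommMonoid M] {a b e x y : M}
    (hab : a * b = e) (hx : e * x = x) (hy : e * y = y) (h : a * x = a * y) : x = y :=
  calc x = b * (a * x) := by rw [← mul_assoc, mul_comm b, hab, hx]
    _ = b * (a * y) := by rw [h]
    _ = y := by rw [← mul_assoc, mul_comm b, hab, hy]

theorem mul_le_iff_le_colonSub {K : Type*} [Field K] {N I J : Submodule ℤ K} :
    N * I ≤ J ↔ N ≤ colonSub J I :=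
  mul_le

section

variable {K : Type*} [Field K] {θ : K} {n k : ℕ}

noncomputable def powerSpan (θ : K) (n : ℕ) : Submodule ℤ K :=
  span ℤ (Set.range fun i : Fin n => θ ^ (i : ℕ))

theorem pow_mem_powerSpan {i : ℕ} (hi : i < n) : θ ^ i ∈ powerSpan θ n :=
  subset_span ⟨⟨i, hi⟩, rfl⟩

theorem pow_mem_powerSpan_of_isIntegral (hθ : IsIntegral ℤ θ) (m : ℕ) :
    θ ^ m ∈ powerSpan θ (minpoly ℤ θ).natDegree :=
  hθ.mem_span_pow ⟨Polynomial.X ^ m, by simp⟩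

theorem powerSpan_mul_self_le (hpow : ∀ m, θ ^ m ∈ powerSpan θ n) :
    powerSpan θ n * powerSpan θ n ≤ powerSpan θ n := by
  rw [powerSpan, span_mul_span, span_le]
  rintro _ ⟨_, ⟨i, rfl⟩, _, ⟨j, rfl⟩, rfl⟩
  dsimp only
  rw [← pow_add]
  exact hpow _

theorem suborderR_eq_mixedSpan_zero : suborderR θ n = mixedSpan θ n 0 := by
  simp only [suborderR, mixedSpan, Nat.le_zero]

theorem ite_mul_pow_mem_mixedSpan (i : Fin n) :
    (if (i : ℕ) ≤ k then 1 else 2) * θ ^ (i : ℕ) ∈ mixedSpan θ n k :=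
  subset_span ⟨i, rfl⟩

theorem pow_mem_mixedSpan {i : ℕ} (hik : i ≤ k) (hi : i < n) : θ ^ i ∈ mixedSpan θ n k := by
  simpa [hik] using ite_mul_pow_mem_mixedSpan (θ := θ) (k := k) ⟨i, hi⟩

theorem one_mem_mixedSpan (hn : 0 < n) : (1 : K) ∈ mixedSpan θ n k := by
  simpa using pow_mem_mixedSpan (θ := θ) (Nat.zero_le k) hn

theorem two_mul_pow_mem_mixedSpan (i : Fin n) : 2 * θ ^ (i : ℕ) ∈ mixedSpan θ n k := by
  by_cases hik : (i : ℕ) ≤ k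
  · simpa using (mixedSpan θ n k).smul_mem (2 : ℤ) (pow_mem_mixedSpan hik i.isLt)
  · simpa [hik] using ite_mul_pow_mem_mixedSpan (θ := θ) (k := k) i

theorem two_mul_mem_mixedSpan {x : K} (hx : x ∈ powerSpan θ n) : 2 * x ∈ mixedSpan θ n k := by
  obtain ⟨c, rfl⟩ := (mem_span_range_iff_exists_fun ℤ).mp hx
  rw [Finset.mul_sum]
  exact sum_mem fun i _ => by
    rw [mul_smul_comm]
    exact (mixedSpan θ n k).smul_mem (c i) (two_mul_pow_mem_mixedSpan i)

theorem mixedSpan_le_powerSpan : mixedSpan θ n k ≤ powerSpan θ n := by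
  refine span_le.mpr ?_
  rintro _ ⟨i, rfl⟩
  dsimp only
  split_ifs
  · simpa using pow_mem_powerSpan i.isLt
  · simpa using (powerSpan θ n).smul_mem (2 : ℤ) (pow_mem_powerSpan i.isLt)

theorem pow_notMem_mixedSpan (hli : LinearIndependent ℤ fun i : Fin n => θ ^ (i : ℕ)) (i : Fin n)
    (hki : k < i) : θ ^ (i : ℕ) ∉ mixedSpan θ n k := by
  intro hmem
  obtain ⟨c, hc⟩ := (mem_span_range_iff_exists_fun ℤ).mp hmem
  have hcoeff : (fun j : Fin n => (if (j : ℕ) ≤ k then 1 else 2) * c j) = Pi.single i 1 := by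
    apply hli.fintypeLinearCombination_injective
    rw [Fintype.linearCombination_apply_single ℤ, Fintype.linearCombination_apply ℤ, one_smul, ← hc]
    refine Finset.sum_congr rfl fun j _ => ?_
    split_ifs <;> simp only [zsmul_eq_mul] <;> push_cast <;> ring
  have hi := congr_fun hcoeff i
  simp only [not_le.mpr hki, ↓reduceIte, Pi.single_eq_same] at hi
  omega

section

variable (hP : powerSpan θ n * powerSpan θ n ≤ powerSpan θ n)
include hP

theorem mul_powerSpan_eq {N : Submodule ℤ K} (hN : N ≤ powerSpan θ n) (h1 : (1 : K) ∈ N) :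
    N * powerSpan θ n = powerSpan θ n :=
  le_antisymm ((mul_le_mul_left hN _).trans hP) fun x hx => by
    simpa using mul_mem_mul h1 hx

theorem mixedSpan_zero_mul_mixedSpan (hn : 0 < n) :
    mixedSpan θ n 0 * mixedSpan θ n k = mixedSpan θ n k := by
  refine le_antisymm ?_ fun x hx => by simpa using mul_mem_mul (one_mem_mixedSpan hn) hx
  rw [mul_le_iff_le_colonSub, mixedSpan, span_le]
  rintro _ ⟨i, rfl⟩ y hy
  by_cases hi : (i : ℕ) = 0
  · simpa [hi] using hy
  · simp only [if_neg (by omega : ¬(i : ℕ) ≤ 0), mul_assoc]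
    exact two_mul_mem_mixedSpan (hP (mul_mem_mul (pow_mem_powerSpan i.isLt)
      (mixedSpan_le_powerSpan hy)))

theorem mixedSpan_one_mul_mixedSpan_sub_two (hn : 2 ≤ n) :
    mixedSpan θ n 1 * mixedSpan θ n (n - 2) = powerSpan θ n := by
  refine le_antisymm ((mul_le_mul' mixedSpan_le_powerSpan mixedSpan_le_powerSpan).trans hP) ?_
  rw [powerSpan, span_le]
  rintro _ ⟨i, rfl⟩
  by_cases hi : (i : ℕ) ≤ n - 2
  · simpa using mul_mem_mul (one_mem_mixedSpan (θ := θ) (k := 1) (by omega))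
      (pow_mem_mixedSpan hi i.isLt)
  · have hθ : θ * θ ^ (n - 2) = θ ^ (i : ℕ) := by
      rw [← pow_succ']
      congr 1
      have := i.isLt
      omega
    simpa [hθ] using mul_mem_mul (pow_mem_mixedSpan (θ := θ) (i := 1) le_rfl (by omega))
      (pow_mem_mixedSpan (θ := θ) le_rfl (show n - 2 < n by omega))

end

end

theorem natDegree_minpoly_int_eq_rat {K : Type*} [Field K] [CharZero K] {θ : K}
    (hθ : IsIntegral ℤ θ) : (minpoly ℤ θ).natDegree = (minpoly ℚ θ).natDegree := by
  rw [minpoly.isIntegrallyClosed_eq_field_fractions' ℚ hθ, (minpoly.monic hθ).natDegree_map]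

/-- Let `θ` be an algebraic integer of degree `n > 2`,
`I = ℤ + ℤθ + 2ℤθ² + ⋯ + 2ℤθ^{n-1}` with coefficient ring
`R = ℤ + 2ℤθ + ⋯ + 2ℤθ^{n-1}`. Then `I` is not invertible in `R`:
there is no fractional ideal `J` with `IJ = R`. -/
theorem stmt3 {K : Type*} [Field K] [CharZero K] {n : ℕ} (hn : 2 < n)
    (θ : K) (hint : IsIntegral ℤ θ) (hdeg : (minpoly ℚ θ).natDegree = n) :
    ¬ ∃ J : Submodule ℤ K, mixedSpan θ n 1 * J = suborderR θ n := by
  rintro ⟨J, hJ⟩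
  rw [suborderR_eq_mixedSpan_zero] at hJ
  have hpow : ∀ m, θ ^ m ∈ powerSpan θ n := by
    simpa only [natDegree_minpoly_int_eq_rat hint, hdeg] using pow_mem_powerSpan_of_isIntegral hint
  have hP := powerSpan_mul_self_le hpow
  have hli : LinearIndependent ℤ fun i : Fin n => θ ^ (i : ℕ) :=
    hdeg ▸ (linearIndependent_pow θ).restrict_scalars' ℤ
  have hIM : mixedSpan θ n 1 * mixedSpan θ n (n - 2) = mixedSpan θ n 1 * powerSpan θ n := by
    rw [mixedSpan_one_mul_mixedSpan_sub_two hP (by omega),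
      mul_powerSpan_eq hP mixedSpan_le_powerSpan (one_mem_mixedSpan (by omega))]
  have hM : mixedSpan θ n (n - 2) = powerSpan θ n :=
    eq_of_mul_left_eq_mul_left hJ (mixedSpan_zero_mul_mixedSpan hP (by omega))
      (mul_powerSpan_eq hP mixedSpan_le_powerSpan (one_mem_mixedSpan (by omega))) hIM
  exact pow_notMem_mixedSpan hli ⟨n - 1, by omega⟩ (by simp only; omega)
    (hM ▸ pow_mem_powerSpan (by omega))
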